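/- arXiv:math/0610258 — 3 statements merged into one kernel-verified Lean document; each statement's English description precedes it below -/
import Mathlib

section
/- Let T be a triangulated category and H a coherent contravariant additive functor on T. Then H is cohomological if and only if Ext^i(F, H) = 0 in the abelian category of coherent functors for every coherent functor F on T and every i ≥ 1. -/
/-!
Representables are projective, so by Yoneda `Ext^i(F, H)` is the cohomology of
`H(P₀) → H(P₁) → ⋯` for a resolution of `F` by representables; its vanishing says that `H`
turns Yoneda-exact pairs `X → Y → Z` into exact sequences. A cohomological `H` does so:
completing `Y → Z` to a distinguished triangle `U → Y → Z → U⟦1⟧`, the maps `X → Y` and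
`U → Y` factor through each other, so `H` kills the same elements along both. Conversely, the
iterated inverse rotations of a distinguished triangle form a resolution by representables of
the cokernel of `(-, T.obj₂) → (-, T.obj₃)`, so Ext-vanishing gives exactness of `H` at
`T.obj₂`, and at the other spots after rotating.
-/

open CategoryTheory CategoryTheory.Limits CategoryTheory.Pretriangulated Opposite

universe w v u

namespace GeneralizedSerreDuality

section
variable (C : Type v) [Category.{w} C] [Preadditive C]

/-- A contravariant additive functor `F : Cᵒᵖ ⥤ Ab` is coherent if there is an exact
sequence of functors `(-, C₀) → (-, C₁) → F → 0`. -/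
def IsCoherent (F : Cᵒᵖ ⥤ AddCommGrpCat.{w}) : Prop :=
  ∃ (C₀ C₁ : C) (f : C₀ ⟶ C₁) (π : preadditiveYoneda.obj C₁ ⟶ F),
    (∀ Y : C, Function.Exact (fun h : Y ⟶ C₀ => h ≫ f) (π.app (op Y))) ∧
    (∀ Y : C, Function.Surjective (π.app (op Y)))

end

section
variable (C : Type v) [Category.{w} C] [Preadditive C] [HasZeroObject C] [HasShift C ℤ]
  [∀ n : ℤ, (shiftFunctor C n).Additive] [Pretriangulated C]

/-- A contravariant additive functor `H : Cᵒᵖ ⥤ Ab` on a triangulated category is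
cohomological if it sends distinguished triangles to exact sequences. -/
def IsCohomological (H : Cᵒᵖ ⥤ AddCommGrpCat.{w}) : Prop :=
  ∀ T : Triangle C, T ∈ (distTriang C) →
    Function.Exact (H.map T.mor₂.op) (H.map T.mor₁.op) ∧
    Function.Exact (H.map T.mor₃.op) (H.map T.mor₂.op)

end

lemma map_op_apply_eq_zero_iff_of_factor {D : Type v} [Category.{w} D]
    {H : Dᵒᵖ ⥤ AddCommGrpCat.{w}} {U X Y : D} {g : X ⟶ Y} {u : U ⟶ Y}
    (a : U ⟶ X) (b : X ⟶ U) (ha : a ≫ g = u) (hb : b ≫ u = g) (x : H.obj (op Y)) :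
    H.map g.op x = 0 ↔ H.map u.op x = 0 := by
  constructor <;> intro hx
  · rw [← ha, op_comp, Functor.map_comp, ConcreteCategory.comp_apply, hx, map_zero]
  · rw [← hb, op_comp, Functor.map_comp, ConcreteCategory.comp_apply, hx, map_zero]

section Cokernel
variable {D : Type v} [Category.{w} D] [Preadditive D] {A B : D} (f : A ⟶ B)

lemma exact_comp_cokernel_π_app (Y : D) :
    Function.Exact (fun h : Y ⟶ A => h ≫ f)
      ((cokernel.π (preadditiveYoneda.map f)).app (op Y)) := by
  have hS := ShortComplex.exact_of_g_is_cokernel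
    (ShortComplex.mk (preadditiveYoneda.map f) (cokernel.π _) (cokernel.condition _))
    (cokernelIsCokernel _)
  exact (ShortComplex.ab_exact_iff_function_exact _).mp (hS.map ((evaluation _ _).obj (op Y)))

lemma surjective_cokernel_π_app (Y : D) :
    Function.Surjective ((cokernel.π (preadditiveYoneda.map f)).app (op Y)) := by
  rw [← AddCommGrpCat.epi_iff_surjective]
  infer_instance

lemma isCoherent_cokernel_preadditiveYoneda_map :
    IsCoherent D (cokernel (preadditiveYoneda.map f)) :=
  ⟨A, B, f, cokernel.π _, exact_comp_cokernel_π_app f, surjective_cokernel_π_app f⟩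

end Cokernel

section Triangulated
variable {D : Type v} [Category.{w} D] [Preadditive D] [HasZeroObject D] [HasShift D ℤ]
  [∀ n : ℤ, (shiftFunctor D n).Additive] [Pretriangulated D]

lemma exact_comp_mor₁_comp_mor₂ (T : Triangle D) (hT : T ∈ distTriang D) (Y : D) :
    Function.Exact (fun h : Y ⟶ T.obj₁ => h ≫ T.mor₁) (fun h : Y ⟶ T.obj₂ => h ≫ T.mor₂) := by
  intro h
  constructor
  · intro hh
    obtain ⟨g, rfl⟩ := Triangle.coyoneda_exact₂ T hT h hh
    exact ⟨g, rfl⟩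
  · rintro ⟨g, rfl⟩
    simp [comp_distTriang_mor_zero₁₂ T hT]

/-- The `mor₂`s of these triangles form the chain `⋯ → T.obj₁ → T.obj₂ → T.obj₃`, since
`(invRotateSeq T (n + 1)).mor₂` is `(invRotateSeq T n).mor₁` by definition. -/
def invRotateSeq (T : Triangle D) : ℕ → Triangle D
  | 0 => T
  | n + 1 => (invRotateSeq T n).invRotate

lemma invRotateSeq_mem_distTriang {T : Triangle D} (hT : T ∈ distTriang D) (n : ℕ) :
    invRotateSeq T n ∈ distTriang D := by
  induction n with
  | zero => exact hT
  | succ n ih => exact inv_rot_of_distTriang _ ih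

variable {H : Dᵒᵖ ⥤ AddCommGrpCat.{w}}

lemma isCohomological_of_exact_map_mor₂_mor₁
    (h : ∀ T ∈ distTriang D, Function.Exact (H.map T.mor₂.op) (H.map T.mor₁.op)) :
    IsCohomological D H :=
  fun T hT => ⟨h T hT, h _ (rot_of_distTriang T hT)⟩

/-- In the distinguished triangle `W⟦-1⟧ →u Y →f Z → W`, Yoneda-exactness of `(g, f)` and of
`(u, f)` make `g` and `u` factor through each other. -/
lemma IsCohomological.exact_map_op_of_exact_comp (hH : IsCohomological D H)
    {X Y Z : D} (g : X ⟶ Y) (f : Y ⟶ Z)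
    (hgf : ∀ W : D, Function.Exact (fun h : W ⟶ X => h ≫ g) (fun h : W ⟶ Y => h ≫ f)) :
    Function.Exact (H.map f.op) (H.map g.op) := by
  obtain ⟨W, v, w, hT⟩ := distinguished_cocone_triangle f
  set T := (Triangle.mk f v w).invRotate
  have hT' : T ∈ distTriang D := inv_rot_of_distTriang _ hT
  obtain ⟨a, ha⟩ : ∃ a, a ≫ g = T.mor₁ := (hgf _ T.mor₁).mp (comp_distTriang_mor_zero₁₂ _ hT')
  obtain ⟨b, hb⟩ : ∃ b, b ≫ T.mor₁ = g :=
    (exact_comp_mor₁_comp_mor₂ T hT' X g).mp ((hgf X g).mpr ⟨𝟙 X, Category.id_comp g⟩)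
  exact fun x => (map_op_apply_eq_zero_iff_of_factor a b ha hb x).trans ((hH T hT').1 x)

end Triangulated

/-- **Lemma 2.3**: let `T` be a triangulated category and `H` a coherent (contravariant
additive) functor on `T`.  Then `H` is cohomological if and only if `Ext^i(F, H) = 0` for
every coherent functor `F` and every `i ≥ 1`.  Since representable functors are projective
and every coherent functor has a resolution by representable functors, the Ext-vanishing is
expressed here by saying: for every coherent `F` and every projective resolution
`⋯ → (-, P₁) → (-, P₀) → F → 0` of `F` by representable functors, the induced complex
`Hom((-, P₀), H) → Hom((-, P₁), H) → ⋯`, which by Yoneda is `H(P₀) → H(P₁) → ⋯`,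
is exact at every position `i ≥ 1`. -/
theorem coherent_cohomological_iff_ext_vanishing
    (C : Type v) [Category.{w} C] [Preadditive C] [HasZeroObject C] [HasShift C ℤ]
    [∀ n : ℤ, (shiftFunctor C n).Additive] [Pretriangulated C]
    (H : Cᵒᵖ ⥤ AddCommGrpCat.{w}) [H.Additive] (hH : IsCoherent C H) :
    IsCohomological C H ↔
      ∀ (F : Cᵒᵖ ⥤ AddCommGrpCat.{w}), IsCoherent C F →
      ∀ (P : ℕ → C) (d : ∀ n, P (n + 1) ⟶ P n) (π : preadditiveYoneda.obj (P 0) ⟶ F),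
        (∀ Y : C, Function.Surjective (π.app (op Y))) →
        (∀ Y : C, Function.Exact (fun h : Y ⟶ P 1 => h ≫ d 0) (π.app (op Y))) →
        (∀ (n : ℕ) (Y : C), Function.Exact
          (fun h : Y ⟶ P (n + 2) => h ≫ d (n + 1)) (fun h : Y ⟶ P (n + 1) => h ≫ d n)) →
        ∀ n : ℕ, Function.Exact (H.map (d n).op) (H.map (d (n + 1)).op) := by
  constructor
  · intro hcoh F _ P d _ _ _ hd n
    exact hcoh.exact_map_op_of_exact_comp _ _ (hd n)
  · intro hext
    refine isCohomological_of_exact_map_mor₂_mor₁ fun T hT => ?_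
    exact hext _ (isCoherent_cokernel_preadditiveYoneda_map T.mor₂)
      (fun n => (invRotateSeq T n).obj₃) (fun n => (invRotateSeq T n).mor₂) _
      (surjective_cokernel_π_app T.mor₂) (exact_comp_cokernel_π_app T.mor₂)
      (fun n => exact_comp_mor₁_comp_mor₂ _ (invRotateSeq_mem_distTriang hT n)) 0

end GeneralizedSerreDuality
end

section
/- Let R be a commutative artinian ring and T a Hom-finite Krull-Schmidt R-linear triangulated category. Then for an object X of T, the functor D Hom_T(X, −) is representable if and only if it is a coherent functor; consequently T_r = {X ∈ T : D Hom_T(X, −) is coherent}. -/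
/-!
If `D Hom(X, -) ≅ (-, S)`, then `(-, S) ⟶ (-, S) ⟶ D Hom(X, -) ⟶ 0`, with the zero map first, is
a presentation. Conversely, a presentation `(-, C₀) ⟶ (-, C₁) ⟶ D Hom(X, -) ⟶ 0` is given by
`f : C₀ ⟶ C₁` and, by Yoneda, an element `x ∈ D Hom(X, C₁)`. Complete `f` to a triangle
`C₀ ⟶ C₁ ⟶ C₂ ⟶ C₀⟦1⟧` with second map `g`. Then `x` vanishes on the kernel of `(X, g)`, so
the injectivity of `E` extends it along `(X, g)` to some `ξ ∈ D Hom(X, C₂)`. Writing `ξ` as the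
image of some `h₀ : C₂ ⟶ C₁`, the endomorphism `h₀ ≫ g` of `C₂` is idempotent and `D Hom(X, -)`
is the image of `(-, h₀ ≫ g)`, hence is represented by the image of `h₀ ≫ g`.

That image exists because Krull-Schmidt categories are idempotent complete: for an idempotent
`e` of `X ⊞ W` with `End X` local, `e` or `𝟙 - e` restricts to an automorphism of `X`, which
splits off `X` and leaves an idempotent supported on `W`.
-/

open CategoryTheory CategoryTheory.Limits CategoryTheory.Linear
open CategoryTheory.Pretriangulated ZeroObject

universe w v u

namespace GeneralizedSerreDuality

/-- `E` is a minimal injective cogenerator for the commutative ring `R`. -/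
structure IsMinimalInjectiveCogenerator (R : Type u) [CommRing R]
    (E : Type u) [AddCommGroup E] [Module R E] : Prop where
  injective : Module.Injective R E
  cogenerates : ∀ (M : Type u) [AddCommGroup M] [Module R M] (m : M), m ≠ 0 →
    ∃ f : M →ₗ[R] E, f m ≠ 0
  minimal : ∀ (E' : Type u) [AddCommGroup E'] [Module R E'], Module.Injective R E' →
    (∀ (M : Type u) [AddCommGroup M] [Module R M] (m : M), m ≠ 0 →
      ∃ f : M →ₗ[R] E', f m ≠ 0) →
    ∃ g : E →ₗ[R] E', Function.Injective g

section
variable (R : Type u) [CommRing R] (E : Type u) [AddCommGroup E] [Module R E]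
variable {C : Type v} [Category.{w} C] [Preadditive C] [CategoryTheory.Linear R C]

/-- `X ∈ C_r`: `D Hom(X, -)` is representable. -/
def MemR (X : C) : Prop :=
  ∃ (SX : C) (φ : ∀ Y : C, ((X ⟶ Y) →ₗ[R] E) ≃ₗ[R] (Y ⟶ SX)),
    ∀ ⦃Y Y' : C⦄ (g : Y ⟶ Y') (ψ : (X ⟶ Y') →ₗ[R] E),
      φ Y (ψ ∘ₗ Linear.rightComp R X g) = g ≫ φ Y' ψ

/-- The contravariant functor `D Hom(X, -)` is coherent: there are objects `C₀, C₁` and an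
exact sequence of functors `(-, C₀) → (-, C₁) → D Hom(X, -) → 0`,
given pointwise by a natural family of additive maps. -/
def DHomRightCoherent (X : C) : Prop :=
  ∃ (C₀ C₁ : C) (f : C₀ ⟶ C₁) (π : ∀ Y : C, (Y ⟶ C₁) →+ ((X ⟶ Y) →ₗ[R] E)),
    (∀ ⦃Y Y' : C⦄ (g : Y' ⟶ Y) (h : Y ⟶ C₁),
      π Y' (g ≫ h) = (π Y h) ∘ₗ Linear.rightComp R X g) ∧
    (∀ Y : C, Function.Exact (fun h : Y ⟶ C₀ => h ≫ f) (π Y)) ∧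
    (∀ Y : C, Function.Surjective (π Y))

end

/-- An additive category is Krull-Schmidt if every object is a finite direct sum of
objects with local endomorphism rings. -/
def IsKrullSchmidt (C : Type v) [Category.{w} C] [Preadditive C]
    [HasFiniteBiproducts C] : Prop :=
  ∀ X : C, ∃ (n : ℕ) (f : Fin n → C),
    Nonempty (X ≅ ⨁ f) ∧ ∀ i, IsLocalRing (End (f i))

section Idempotents

variable {C : Type v} [Category.{w} C]

def Splits {Z : C} (e : Z ⟶ Z) : Prop :=
  ∃ (Y : C) (i : Y ⟶ Z) (r : Z ⟶ Y), i ≫ r = 𝟙 Y ∧ r ≫ i = e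

def HasSplitIdempotents (Z : C) : Prop :=
  ∀ e : Z ⟶ Z, e ≫ e = e → Splits e

lemma hasSplitIdempotents_of_isZero {Z : C} (hZ : IsZero Z) : HasSplitIdempotents Z :=
  fun _ _ => ⟨Z, 𝟙 Z, 𝟙 Z, Category.comp_id _, hZ.eq_of_src _ _⟩

/-- A splitting of `e` is obtained from one of the idempotent `i ≫ e ≫ r` of `V`. -/
lemma splits_of_factorsThrough {V Z : C} (r : Z ⟶ V) (i : V ⟶ Z)
    (hV : HasSplitIdempotents V) {e : Z ⟶ Z} (he : e ≫ e = e) (hre : r ≫ i ≫ e = e) :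
    Splits e := by
  have hV' : (i ≫ e ≫ r) ≫ (i ≫ e ≫ r) = i ≫ e ≫ r := by
    simp only [Category.assoc, reassoc_of% hre, reassoc_of% he]
  obtain ⟨Y, j, q, hjq, hqj⟩ := hV _ hV'
  refine ⟨Y, j ≫ i ≫ e, r ≫ q, ?_, ?_⟩
  · calc (j ≫ i ≫ e) ≫ r ≫ q = j ≫ (i ≫ e ≫ r) ≫ q := by simp
      _ = (j ≫ q) ≫ (j ≫ q) := by rw [← hqj]; simp
      _ = 𝟙 Y := by rw [hjq, Category.comp_id]
  · calc (r ≫ q) ≫ j ≫ i ≫ e = (r ≫ i ≫ e) ≫ (r ≫ i ≫ e) := by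
          rw [Category.assoc, reassoc_of% hqj]; simp
      _ = e := by rw [hre, he]

lemma HasSplitIdempotents.of_iso {V Z : C} (α : V ≅ Z) (hV : HasSplitIdempotents V) :
    HasSplitIdempotents Z :=
  fun _ he => splits_of_factorsThrough α.inv α.hom hV he (by simp)

variable [Preadditive C] [HasBinaryBiproducts C]

lemma Splits.add {Z : C} {e₁ e₂ : Z ⟶ Z} (h₁ : Splits e₁) (h₂ : Splits e₂)
    (h₁₂ : e₁ ≫ e₂ = 0) (h₂₁ : e₂ ≫ e₁ = 0) : Splits (e₁ + e₂) := by
  obtain ⟨Y₁, i₁, r₁, hir₁, rfl⟩ := h₁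
  obtain ⟨Y₂, i₂, r₂, hir₂, rfl⟩ := h₂
  have hi₁r₂ : i₁ ≫ r₂ = 0 := by
    calc i₁ ≫ r₂ = (i₁ ≫ r₁) ≫ i₁ ≫ (r₂ ≫ i₂) ≫ r₂ := by
          simp [reassoc_of% hir₁, hir₂]
      _ = 0 := by simp [reassoc_of% h₁₂]
  have hi₂r₁ : i₂ ≫ r₁ = 0 := by
    calc i₂ ≫ r₁ = (i₂ ≫ r₂) ≫ i₂ ≫ (r₁ ≫ i₁) ≫ r₁ := by
          simp [reassoc_of% hir₂, hir₁]
      _ = 0 := by simp [reassoc_of% h₂₁]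
  refine ⟨Y₁ ⊞ Y₂, biprod.desc i₁ i₂, biprod.lift r₁ r₂, ?_, by simp⟩
  ext <;> simp [hir₁, hir₂, hi₁r₂, hi₂r₁]

end Idempotents

section LocalSummand

variable {C : Type v} [Category.{w} C] [Preadditive C] [HasBinaryBiproducts C] {X W : C}

/-- `e` factors through `W` via the projection `𝟙 - fst ≫ (s ≫ fst)⁻¹ ≫ s` away from `s`. -/
lemma splits_of_comp_eq_zero (hW : HasSplitIdempotents W) (s : X ⟶ X ⊞ W)
    [IsIso (s ≫ biprod.fst)] {e : X ⊞ W ⟶ X ⊞ W} (he : e ≫ e = e) (hse : s ≫ e = 0) :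
    Splits e := by
  set f : X ⊞ W ⟶ X ⊞ W := 𝟙 _ - biprod.fst ≫ inv (s ≫ biprod.fst) ≫ s
  have hf_fst : f ≫ biprod.fst = 0 := by simp [f]
  have hfe : f ≫ e = e := by simp [f, hse]
  have hsnd : (biprod.snd ≫ biprod.inr : X ⊞ W ⟶ _) = 𝟙 _ - biprod.fst ≫ biprod.inl := by
    rw [← biprod.total]; abel
  refine splits_of_factorsThrough (f ≫ biprod.snd) biprod.inr hW he ?_
  calc (f ≫ biprod.snd) ≫ biprod.inr ≫ e = f ≫ (biprod.snd ≫ biprod.inr) ≫ e := by simp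
    _ = e := by
      simp [hsnd, Preadditive.sub_comp, Preadditive.comp_sub, reassoc_of% hf_fst, hfe]

/-- `e` is the orthogonal sum of `t ≫ s`, split through `X`, and an idempotent killing `s`. -/
lemma splits_of_comp_eq_self (hW : HasSplitIdempotents W) (s : X ⟶ X ⊞ W)
    [IsIso (s ≫ biprod.fst)] {e : X ⊞ W ⟶ X ⊞ W} (he : e ≫ e = e) (hse : s ≫ e = s) :
    Splits e := by
  set t : X ⊞ W ⟶ X := e ≫ biprod.fst ≫ inv (s ≫ biprod.fst)
  have hst : s ≫ t = 𝟙 X := by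
    simp only [t, reassoc_of% hse]; rw [← Category.assoc, IsIso.hom_inv_id]
  have hu : Splits (t ≫ s) := ⟨X, s, t, hst, rfl⟩
  have htse : t ≫ s ≫ e = t ≫ s := by rw [hse]
  have hets : e ≫ t ≫ s = t ≫ s := by simp [t, reassoc_of% he]
  have hcompl : Splits (e - t ≫ s) := by
    refine splits_of_comp_eq_zero hW s ?_ ?_
    · simp [Preadditive.sub_comp, Preadditive.comp_sub, he, htse, hets, reassoc_of% hst]
    · simp [Preadditive.comp_sub, hse, reassoc_of% hst]
  simpa using hu.add hcompl (by simp [Preadditive.comp_sub, htse, reassoc_of% hst])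
    (by simp [Preadditive.sub_comp, hets, reassoc_of% hst])

lemma hasSplitIdempotents_biprod [IsLocalRing (End X)] (hW : HasSplitIdempotents W) :
    HasSplitIdempotents (X ⊞ W) := by
  intro e he
  let a : End X := biprod.inl ≫ e ≫ biprod.fst
  rcases IsLocalRing.isUnit_or_isUnit_of_add_one (add_sub_cancel a 1) with hu | hu
  · have : IsIso ((biprod.inl ≫ e) ≫ biprod.fst) := by simpa [isUnit_iff_isIso] using hu
    exact splits_of_comp_eq_self hW (biprod.inl ≫ e) he (by simp [he])
  · have : IsIso ((biprod.inl ≫ (𝟙 _ - e)) ≫ biprod.fst) := by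
      simpa [isUnit_iff_isIso, Preadditive.comp_sub, Preadditive.sub_comp] using hu
    exact splits_of_comp_eq_zero hW (biprod.inl ≫ (𝟙 _ - e)) he
      (by simp [Preadditive.sub_comp, he])

end LocalSummand

section KrullSchmidt

variable {C : Type v} [Category.{w} C] [Preadditive C] [HasFiniteBiproducts C]

attribute [local instance] hasBinaryBiproducts_of_finite_biproducts

noncomputable def biproductIsoBiprodCompl {ι : Type*} [Finite ι] [DecidableEq ι] (f : ι → C)
    (j : ι) : ⨁ f ≅ f j ⊞ ⨁ Subtype.restrict (· ≠ j) f :=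
  biprod.uniqueUpToIso _ _ <| isBinaryBilimitOfTotal
    { pt := ⨁ f
      fst := biproduct.π f j
      snd := biproduct.toSubtype f _
      inl := biproduct.ι f j
      inr := biproduct.fromSubtype f _
      inl_snd := by simp [biproduct.ι_toSubtype]
      inr_fst := by simp [biproduct.fromSubtype_π] }
    (by
      ext i i'
      rcases eq_or_ne i j with rfl | hi
      · simp [biproduct.ι_π, Preadditive.add_comp]
      · simp [hi, hi.symm, biproduct.ι_π, Preadditive.add_comp])

lemma hasSplitIdempotents_biproduct {ι : Type*} [Finite ι] (f : ι → C)
    (hf : ∀ i, IsLocalRing (End (f i))) : HasSplitIdempotents (⨁ f) := by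
  classical
  cases nonempty_fintype ι
  obtain ⟨n, hn⟩ : ∃ n, Fintype.card ι = n := ⟨_, rfl⟩
  induction n generalizing ι with
  | zero =>
    have := Fintype.card_eq_zero_iff.mp hn
    exact hasSplitIdempotents_of_isZero <| IsZero.of_iso (isZero_zero C) {
      hom := 0, inv := 0, hom_inv_id := biproduct.hom_ext' _ _ isEmptyElim }
  | succ n ih =>
    obtain ⟨j⟩ : Nonempty ι := Fintype.card_pos_iff.mp (by omega)
    have := hf j
    have hW := ih (Subtype.restrict (· ≠ j) f) (fun i => hf i) inferInstance (by simp [hn])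
    exact (hasSplitIdempotents_biprod hW).of_iso (biproductIsoBiprodCompl f j).symm

lemma isIdempotentComplete_of_isKrullSchmidt (hKS : IsKrullSchmidt C) :
    IsIdempotentComplete C := by
  refine ⟨fun Z e he => ?_⟩
  obtain ⟨n, f, ⟨α⟩, hf⟩ := hKS Z
  exact (hasSplitIdempotents_biproduct f hf).of_iso α.symm e he

end KrullSchmidt

lemma exists_comp_eq_of_ker_le {R : Type*} [CommRing R] {E : Type*} [AddCommGroup E]
    [Module R E] (hE : Module.Baer R E) {M N : Type*} [AddCommGroup M] [Module R M]
    [AddCommGroup N] [Module R N] (G : M →ₗ[R] N) (x : M →ₗ[R] E)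
    (h : LinearMap.ker G ≤ LinearMap.ker x) : ∃ ξ : N →ₗ[R] E, ξ ∘ₗ G = x := by
  have hinj : Function.Injective ((LinearMap.ker G).liftQ G le_rfl) := by
    rw [← LinearMap.ker_eq_bot]
    exact Submodule.ker_liftQ_eq_bot _ _ _ le_rfl
  obtain ⟨ξ, hξ⟩ := hE.extension_property _ hinj ((LinearMap.ker G).liftQ x h)
  refine ⟨ξ, LinearMap.ext fun m => ?_⟩
  simpa using LinearMap.congr_fun hξ (Submodule.Quotient.mk m)

section Duality

variable {R : Type u} [CommRing R] {E : Type u} [AddCommGroup E] [Module R E]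
variable {C : Type v} [Category.{w} C] [Preadditive C] [Linear R C]

/-- The morphism `(-, Z) ⟶ D Hom(X, -)` corresponding to `ξ ∈ D Hom(X, Z)` by Yoneda. -/
def dualYoneda {X Z : C} (ξ : (X ⟶ Z) →ₗ[R] E) (Y : C) :
    (Y ⟶ Z) →ₗ[R] (X ⟶ Y) →ₗ[R] E :=
  (Linear.comp (S := R) X Y Z).flip.compr₂ ξ

@[simp]
lemma dualYoneda_apply {X Y Z : C} (ξ : (X ⟶ Z) →ₗ[R] E) (h : Y ⟶ Z) (m : X ⟶ Y) :
    dualYoneda ξ Y h m = ξ (m ≫ h) :=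
  rfl

lemma dualYoneda_comp {X Y Y' Z : C} (ξ : (X ⟶ Z) →ₗ[R] E) (g : Y' ⟶ Y) (h : Y ⟶ Z) :
    dualYoneda ξ Y' (g ≫ h) = dualYoneda ξ Y h ∘ₗ Linear.rightComp R X g := by
  ext m
  simp

lemma eq_dualYoneda_of_natural {X Z : C} (π : ∀ Y : C, (Y ⟶ Z) →+ ((X ⟶ Y) →ₗ[R] E))
    (hπ : ∀ ⦃Y Y' : C⦄ (g : Y' ⟶ Y) (h : Y ⟶ Z),
      π Y' (g ≫ h) = (π Y h) ∘ₗ Linear.rightComp R X g)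
    ⦃Y : C⦄ (h : Y ⟶ Z) : π Y h = dualYoneda (π Z (𝟙 Z)) Y h := by
  ext m
  simpa using LinearMap.congr_fun (hπ h (𝟙 Z)) m

lemma memR_of_bijective_dualYoneda {X S : C} (ξ : (X ⟶ S) →ₗ[R] E)
    (hξ : ∀ Y, Function.Bijective (dualYoneda ξ Y)) : MemR R E X := by
  refine ⟨S, fun Y => (LinearEquiv.ofBijective _ (hξ Y)).symm, fun Y Y' g ψ => ?_⟩
  obtain ⟨t, rfl⟩ := (hξ Y').2 ψ
  rw [← dualYoneda_comp]
  simp [LinearEquiv.ofBijective_symm_apply_apply]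

/-- If `D Hom(X, -)` is the image of the idempotent `(-, e)` under `dualYoneda ξ`, it is
represented by the image of `e`. -/
lemma memR_of_idempotent [IsIdempotentComplete C] {X Z : C} (ξ : (X ⟶ Z) →ₗ[R] E)
    {e : Z ⟶ Z} (he : e ≫ e = e) (hξe : ∀ n : X ⟶ Z, ξ (n ≫ e) = ξ n)
    (hsurj : ∀ Y, Function.Surjective (dualYoneda ξ Y))
    (hker : ∀ ⦃Y⦄ (k : Y ⟶ Z), dualYoneda ξ Y k = 0 → k ≫ e = 0) : MemR R E X := by
  obtain ⟨S, i, r, hir, rfl⟩ := IsIdempotentComplete.idempotents_split Z e he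
  have hcomp : ∀ {Y} (t : Y ⟶ S),
      dualYoneda (dualYoneda ξ S i) Y t = dualYoneda ξ Y (t ≫ i) := by
    intro Y t; ext m; simp
  refine memR_of_bijective_dualYoneda (dualYoneda ξ S i) fun Y => ⟨?_, fun ψ => ?_⟩
  · rw [← LinearMap.ker_eq_bot, LinearMap.ker_eq_bot']
    intro t ht
    have hti : t ≫ i = 0 := by simpa [reassoc_of% hir] using hker _ ((hcomp t).symm.trans ht)
    simpa [hir] using hti =≫ r
  · obtain ⟨k, rfl⟩ := hsurj Y ψ
    refine ⟨k ≫ r, ?_⟩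
    rw [hcomp]
    ext m
    simpa using hξe (m ≫ k)

end Duality

section Coherence

variable {R : Type u} [CommRing R] {E : Type u} [AddCommGroup E] [Module R E]
variable {C : Type v} [Category.{w} C] [Preadditive C] [Linear R C]

lemma MemR.dHomRightCoherent {X : C} (h : MemR R E X) : DHomRightCoherent R E X := by
  obtain ⟨S, φ, hφ⟩ := h
  refine ⟨S, S, 0, fun Y => ((φ Y).symm : (Y ⟶ S) →ₗ[R] _).toAddMonoidHom, ?_, ?_, ?_⟩
  · intro Y Y' g t
    simp [LinearEquiv.symm_apply_eq, hφ]
  · intro Y t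
    simp
  · exact fun Y => (φ Y).symm.surjective

lemma DHomRightCoherent.memR [HasZeroObject C] [HasShift C ℤ]
    [∀ n : ℤ, (shiftFunctor C n).Additive] [Pretriangulated C] [IsIdempotentComplete C]
    (hE : Module.Baer R E) {X : C} (h : DHomRightCoherent R E X) : MemR R E X := by
  obtain ⟨C₀, C₁, f, π, hnat, hexact, hsurj⟩ := h
  obtain ⟨x, hπ⟩ : ∃ x, ∀ ⦃Y⦄ (h : Y ⟶ C₁), π Y h = dualYoneda x Y h :=
    ⟨_, eq_dualYoneda_of_natural π hnat⟩
  obtain ⟨C₂, g, δ, hT⟩ := distinguished_cocone_triangle f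
  have hfg : f ≫ g = 0 := comp_distTriang_mor_zero₁₂ _ hT
  have hker : ∀ ⦃Y⦄ (k : Y ⟶ C₁), π Y k = 0 → k ≫ g = 0 := fun Y k hk => by
    obtain ⟨l, rfl⟩ := (hexact Y k).mp hk
    simp [hfg]
  obtain ⟨ξ, hξ⟩ : ∃ ξ : (X ⟶ C₂) →ₗ[R] E, ξ ∘ₗ Linear.rightComp R X g = x := by
    refine exists_comp_eq_of_ker_le hE _ x fun k (hk : k ≫ g = 0) => ?_
    obtain ⟨l, rfl⟩ : ∃ l : X ⟶ C₀, k = l ≫ f := Triangle.coyoneda_exact₂ _ hT k hk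
    have hf : π C₀ f = 0 := (hexact C₀ f).mpr ⟨𝟙 C₀, Category.id_comp f⟩
    simpa [hπ] using LinearMap.congr_fun hf l
  have hξg : ∀ k : X ⟶ C₁, ξ (k ≫ g) = x k := fun k => LinearMap.congr_fun hξ k
  obtain ⟨h₀, hh₀⟩ := hsurj C₂ ξ
  have hxh₀ : ∀ n : X ⟶ C₂, x (n ≫ h₀) = ξ n := fun n => by
    simpa [hπ] using LinearMap.congr_fun hh₀ n
  have hghg : g ≫ h₀ ≫ g = g := by
    have : π C₁ (g ≫ h₀ - 𝟙 C₁) = 0 := by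
      rw [map_sub, hπ, hπ, sub_eq_zero]
      ext m
      simpa [hξg] using hxh₀ (m ≫ g)
    simpa [Preadditive.sub_comp, sub_eq_zero] using hker _ this
  refine memR_of_idempotent ξ (e := h₀ ≫ g) (by simp [hghg])
    (fun n => by rw [← Category.assoc, hξg, hxh₀]) (fun Y ψ => ?_) (fun Y k hk => ?_)
  · obtain ⟨k, rfl⟩ := hsurj Y ψ
    exact ⟨k ≫ g, by ext m; simpa [hπ] using hξg (m ≫ k)⟩
  · rw [← Category.assoc]
    refine hker _ ?_
    rw [hπ]
    ext m
    have hkm : ξ (m ≫ k) = 0 := by simpa using LinearMap.congr_fun hk m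
    simpa [hkm] using hxh₀ (m ≫ k)

end Coherence

/-- For a Hom-finite Krull-Schmidt `R`-linear triangulated category `T` and `X ∈ T`,
the functor `D Hom(X, -)` is representable if and only if it is coherent; consequently
`T_r = { X | D Hom(X, -) is coherent }`. -/
theorem memR_iff_coherent
    (R : Type u) [CommRing R] [IsArtinianRing R]
    (E : Type u) [AddCommGroup E] [Module R E]
    (hE : IsMinimalInjectiveCogenerator R E)
    (C : Type v) [Category.{w} C] [Preadditive C] [CategoryTheory.Linear R C]
    [HasZeroObject C] [HasShift C ℤ] [∀ n : ℤ, (shiftFunctor C n).Additive]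
    [Pretriangulated C] [HasFiniteBiproducts C]
    [∀ X Y : C, Module.Finite R (X ⟶ Y)]
    (hKS : IsKrullSchmidt C) :
    ∀ X : C, MemR R E X ↔ DHomRightCoherent R E X := by
  have := isIdempotentComplete_of_isKrullSchmidt hKS
  exact fun X => ⟨MemR.dHomRightCoherent, (·.memR (Module.Baer.of_injective hE.injective))⟩

end GeneralizedSerreDuality
end

section
/- Let A be a Hom-finite R-linear abelian category. Then every object of A_r is projective in A, and every object of A_l is injective in A. -/
open CategoryTheory CategoryTheory.Limits CategoryTheory.Linear

universe w v u

namespace GeneralizedSerreDuality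

section
variable (R : Type u) [CommRing R] (E : Type u) [AddCommGroup E] [Module R E]
variable {C : Type v} [Category.{w} C] [Preadditive C] [CategoryTheory.Linear R C]

/-- `X ∈ C_l`: `D Hom(-, X)` is representable. -/
def MemL (X : C) : Prop :=
  ∃ (TX : C) (φ : ∀ Y : C, ((Y ⟶ X) →ₗ[R] E) ≃ₗ[R] (TX ⟶ Y)),
    ∀ ⦃Y Y' : C⦄ (g : Y ⟶ Y') (ψ : (Y ⟶ X) →ₗ[R] E),
      φ Y' (ψ ∘ₗ Linear.leftComp R X g) = φ Y ψ ≫ g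

end

/-! Matlis duality `D = Hom_R(-, E)` is faithful and exact, so a linear map `F` is surjective as
soon as `D F` is injective. For `X ∈ A_r` and an epimorphism `e`, naturality of
`D Hom(X, -) ≅ Hom(-, SX)` identifies `D (Hom(X, e))` with precomposition by `e`, which is
injective; hence `Hom(X, e)` is surjective, i.e. `X` is projective. Dually for `A_l`. -/

namespace IsMinimalInjectiveCogenerator

variable {R : Type u} [CommRing R] {E : Type u} [AddCommGroup E] [Module R E]

/-- The cogenerator property is only postulated for modules in `Type u`; it transfers to
every universe because `span R {m}` is `u`-small and `E` is injective. -/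
theorem exists_apply_ne_zero (hE : IsMinimalInjectiveCogenerator R E)
    {M : Type w} [AddCommGroup M] [Module R M] {m : M} (hm : m ≠ 0) :
    ∃ f : M →ₗ[R] E, f m ≠ 0 := by
  let S := Submodule.span R {m}
  let e := Shrink.linearEquiv.{u} R S
  have hm' : e.symm ⟨m, Submodule.mem_span_singleton_self m⟩ ≠ 0 := by
    simpa [Subtype.ext_iff] using hm
  obtain ⟨g, hg⟩ := hE.cogenerates _ _ hm'
  have := hE.injective
  obtain ⟨f, hf⟩ := Module.Injective.extension_property R E S M S.subtype
    Subtype.val_injective (g ∘ₗ e.symm.toLinearMap)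
  exact ⟨f, by simpa using congr($hf ⟨m, Submodule.mem_span_singleton_self m⟩) ▸ hg⟩

theorem surjective_of_forall_comp_eq_zero (hE : IsMinimalInjectiveCogenerator R E)
    {M : Type v} {N : Type w} [AddCommGroup M] [Module R M] [AddCommGroup N] [Module R N]
    (F : M →ₗ[R] N) (hF : ∀ ψ : N →ₗ[R] E, ψ ∘ₗ F = 0 → ψ = 0) :
    Function.Surjective F := by
  intro n
  by_contra hn
  have hq : (LinearMap.range F).mkQ n ≠ 0 := by
    simpa [Submodule.Quotient.mk_eq_zero] using hn
  obtain ⟨g, hg⟩ := hE.exists_apply_ne_zero hq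
  have hgF : (g ∘ₗ (LinearMap.range F).mkQ) ∘ₗ F = 0 := by
    rw [LinearMap.comp_assoc, LinearMap.range_mkQ_comp, LinearMap.comp_zero]
  exact hg congr($(hF _ hgF) n)

end IsMinimalInjectiveCogenerator

variable {R : Type u} [CommRing R] {E : Type u} [AddCommGroup E] [Module R E]
variable {C : Type v} [Category.{w} C] [Preadditive C] [CategoryTheory.Linear R C]

theorem MemR.projective {X : C} (hX : MemR R E X) (hE : IsMinimalInjectiveCogenerator R E) :
    Projective X := by
  obtain ⟨_, φ, hφ⟩ := hX
  refine ⟨fun {_ Z} f e _ => hE.surjective_of_forall_comp_eq_zero (Linear.rightComp R X e)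
    (fun ψ hψ => ?_) f⟩
  have he : e ≫ φ Z ψ = 0 := by rw [← hφ e ψ, hψ, map_zero]
  exact (φ Z).map_eq_zero_iff.mp (zero_of_epi_comp e he)

theorem MemL.injective {X : C} (hX : MemL R E X) (hE : IsMinimalInjectiveCogenerator R E) :
    Injective X := by
  obtain ⟨_, φ, hφ⟩ := hX
  refine ⟨fun {Y _} g f _ => hE.surjective_of_forall_comp_eq_zero (Linear.leftComp R X f)
    (fun ψ hψ => ?_) g⟩
  have hf : φ Y ψ ≫ f = 0 := by rw [← hφ f ψ, hψ, map_zero]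
  exact (φ Y).map_eq_zero_iff.mp (zero_of_comp_mono f hf)

/-- For a Hom-finite `R`-linear abelian category `A`, every object of `A_r` is
projective and every object of `A_l` is injective. -/
theorem memR_projective_and_memL_injective
    (R : Type u) [CommRing R] [IsArtinianRing R]
    (E : Type u) [AddCommGroup E] [Module R E]
    (hE : IsMinimalInjectiveCogenerator R E)
    (A : Type v) [Category.{w} A] [Abelian A] [CategoryTheory.Linear R A]
    [∀ X Y : A, Module.Finite R (X ⟶ Y)] :
    (∀ X : A, MemR R E X → Projective X) ∧
    (∀ X : A, MemL R E X → Injective X) :=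
  ⟨fun _ hX => hX.projective hE, fun _ hX => hX.injective hE⟩

end GeneralizedSerreDuality
end
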